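/- arXiv:2007.00075 — 5 statements merged into one kernel-verified Lean document; each statement's English description precedes it below -/
import Mathlib

section
/- For a parametrized surface with Weingarten map Ĥ = −n̂_{,α} ⊗ a^α in parametric coordinates and extended Weingarten map H = −∇n·P defined on the embedding space, one has Ĥ = H ∘ r. -/
open Matrix MeasureTheory
noncomputable section

abbrev V3 := Fin 3 → ℝ
abbrev V2 := Fin 2 → ℝ
abbrev M3 := Matrix (Fin 3) (Fin 3) ℝ

/-- ambient partial derivative of a scalar field on ℝ³ -/
def pd (i : Fin 3) (f : V3 → ℝ) (x : V3) : ℝ := fderiv ℝ f x (Pi.single i 1)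
/-- ambient gradient ∇f -/
def grad (f : V3 → ℝ) (x : V3) : V3 := fun i => pd i f x
/-- ambient Jacobian (∇u)_{ij} = ∂u_i/∂x_j -/
def jac (u : V3 → V3) (x : V3) : M3 := fun i j => pd j (fun y => u y i) x
/-- ambient Hessian ∇∇f -/
def hess (f : V3 → ℝ) (x : V3) : M3 := fun i j => pd j (fun y => pd i f y) x
/-- dyadic (outer) product a ⊗ b -/
def outer (a b : V3) : M3 := vecMulVec a b
/-- Euclidean norm on ℝ³ -/
def norm3 (v : V3) : ℝ := Real.sqrt (v ⬝ᵥ v)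
/-- cross product on ℝ³ -/
def cross3 (a b : V3) : V3 := crossProduct a b
/-- standard Cartesian basis -/
def e3 (i : Fin 3) : V3 := Pi.single i 1

/-- parametric partial derivative of a scalar field on the parameter domain -/
def pd2 (α : Fin 2) (f : V2 → ℝ) (θ : V2) : ℝ := fderiv ℝ f θ (Pi.single α 1)
/-- parametric partial derivative of a vector field -/
def pdv2 (α : Fin 2) (f : V2 → V3) (θ : V2) : V3 := fun i => pd2 α (fun t => f t i) θ
/-- parametric partial derivative of a matrix (second-order tensor) field -/
def pdm2 (α : Fin 2) (T : V2 → M3) (θ : V2) : M3 := fun i j => pd2 α (fun t => T t i j) θ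

/-- covariant basis a_α = ∂r/∂θ^α -/
def cov (r : V2 → V3) (α : Fin 2) (θ : V2) : V3 := pdv2 α r θ
/-- first fundamental form g_{αβ} = a_α · a_β -/
def fff (r : V2 → V3) (θ : V2) : Matrix (Fin 2) (Fin 2) ℝ := fun α β => cov r α θ ⬝ᵥ cov r β θ
/-- contravariant basis a^α = g^{αβ} a_β -/
def contrav (r : V2 → V3) (α : Fin 2) (θ : V2) : V3 := ∑ β, (fff r θ)⁻¹ α β • cov r β θ
/-- unit normal n = (a_1 × a_2)/‖a_1 × a_2‖ -/
def nhat (r : V2 → V3) (θ : V2) : V3 :=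
  (norm3 (cross3 (cov r 0 θ) (cov r 1 θ)))⁻¹ • cross3 (cov r 0 θ) (cov r 1 θ)
/-- Christoffel symbols Γ^γ_{αβ} = a^γ · a_{α,β} -/
def christ (r : V2 → V3) (γ α β : Fin 2) (θ : V2) : ℝ := contrav r γ θ ⬝ᵥ pdv2 β (cov r α) θ
/-- second fundamental form h_{αβ} = −a_α · n_{,β} -/
def sff (r : V2 → V3) (α β : Fin 2) (θ : V2) : ℝ := -(cov r α θ ⬝ᵥ pdv2 β (nhat r) θ)
/-- mean curvature H = h^α_α = g^{αγ} h_{γα} -/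
def meanCurv (r : V2 → V3) (θ : V2) : ℝ := ∑ α, ∑ γ, (fff r θ)⁻¹ α γ * sff r γ α θ

/-- vector invariant [T]_× = T_{ij} e^i × e^j -/
def vecInv (T : M3) : V3 := ∑ i, ∑ j, T i j • cross3 (e3 i) (e3 j)
/-- scalar-cross product V ⨯ T = V_{ij} T_{lk} (e^j·e^l)(e^i × e^k) -/
def scalarCross (A B : M3) : V3 :=
  ∑ i, ∑ j, ∑ l, ∑ k, (A i j * B l k * (e3 j ⬝ᵥ e3 l)) • cross3 (e3 i) (e3 k)
/-- cross product of a vector and a second-order tensor,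
    v × T = v_i T_{lk} (e^i × e^l) ⊗ e^k -/
def crossT (v : V3) (T : M3) : M3 :=
  ∑ i, ∑ l, ∑ k, (v i * T l k) • outer (cross3 (e3 i) (e3 l)) (e3 k)

lemma fderiv_apply_eq_sum (f : V3 → ℝ) (x v : V3) :
    fderiv ℝ f x v = ∑ j, v j * fderiv ℝ f x (Pi.single j 1) := by
  have hv : v = ∑ j, v j • (Pi.single j 1 : V3) := by
    funext k
    simp [Pi.single_apply, Finset.sum_apply]
  conv_lhs => rw [hv]
  rw [map_sum]
  simp [smul_eq_mul]

lemma mul_vecMulVec (M : M3) (v w : V3) :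
    M * vecMulVec v w = vecMulVec (M *ᵥ v) w := by
  ext i j
  simp only [vecMulVec_apply, Matrix.mul_apply, mulVec, dotProduct, Finset.sum_mul]
  exact Finset.sum_congr rfl fun x _ => by ring

lemma vecMulVec_mulVec' (a b v : V3) :
    vecMulVec a b *ᵥ v = (b ⬝ᵥ v) • a := by
  funext i
  simp only [vecMulVec_apply, mulVec, dotProduct, Pi.smul_apply, smul_eq_mul]
  rw [Finset.sum_mul]
  exact Finset.sum_congr rfl fun x _ => by ring

lemma pdv2_comp (r : V2 → V3) (hr : ContDiff ℝ (⊤ : ℕ∞) r) (n : V3 → V3) (hn : ContDiff ℝ (⊤ : ℕ∞) n)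
    (θ : V2) (α : Fin 2) :
    pdv2 α (fun t => n (r t)) θ = jac n (r θ) *ᵥ pdv2 α r θ := by
  have hrd : DifferentiableAt ℝ r θ := (hr.differentiable (by simp)).differentiableAt
  have hw : ∀ j : Fin 3, fderiv ℝ r θ (Pi.single α 1) j = pdv2 α r θ j := by
    intro j
    have hpj : (fun t => r t j) = (ContinuousLinearMap.proj j : V3 →L[ℝ] ℝ) ∘ r := rfl
    have := fderiv_comp (𝕜 := ℝ) θ
      ((ContinuousLinearMap.proj j : V3 →L[ℝ] ℝ)).differentiableAt hrd
    calc fderiv ℝ r θ (Pi.single α 1) j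
        = ((ContinuousLinearMap.proj j : V3 →L[ℝ] ℝ).comp (fderiv ℝ r θ)) (Pi.single α 1) := rfl
      _ = fderiv ℝ ((ContinuousLinearMap.proj j : V3 →L[ℝ] ℝ) ∘ r) θ (Pi.single α 1) := by
          rw [this, (ContinuousLinearMap.proj j : V3 →L[ℝ] ℝ).fderiv]
      _ = pdv2 α r θ j := by rw [← hpj]; rfl
  funext i
  have hni : DifferentiableAt ℝ (fun y => n y i) (r θ) :=
    ((ContinuousLinearMap.proj i : V3 →L[ℝ] ℝ)).differentiableAt.comp (r θ)
      ((hn.differentiable (by simp)).differentiableAt)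
  have hcomp : (fun t => n (r t) i) = (fun y => n y i) ∘ r := rfl
  calc pdv2 α (fun t => n (r t)) θ i
      = fderiv ℝ ((fun y => n y i) ∘ r) θ (Pi.single α 1) := by rw [← hcomp]; rfl
    _ = fderiv ℝ (fun y => n y i) (r θ) (fderiv ℝ r θ (Pi.single α 1)) := by
        rw [fderiv_comp θ hni hrd]; rfl
    _ = ∑ j, fderiv ℝ r θ (Pi.single α 1) j * fderiv ℝ (fun y => n y i) (r θ) (Pi.single j 1) :=
        fderiv_apply_eq_sum _ _ _
    _ = (jac n (r θ) *ᵥ pdv2 α r θ) i := by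
        simp only [mulVec, dotProduct, jac, pd]
        exact Finset.sum_congr rfl fun j _ => by rw [hw j]; ring

lemma sum_dotProduct2 (f : Fin 2 → V3) (w : V3) :
    (∑ α, f α) ⬝ᵥ w = ∑ α, f α ⬝ᵥ w := by
  rw [Fin.sum_univ_two, Fin.sum_univ_two, add_dotProduct]

lemma proj_eq (r : V2 → V3) (θ : V2) (hc : cross3 (cov r 0 θ) (cov r 1 θ) ≠ 0) :
    (∑ α, outer (cov r α θ) (contrav r α θ)) = 1 - outer (nhat r θ) (nhat r θ) := by
  set a0 := cov r 0 θ with ha0def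
  set a1 := cov r 1 θ with ha1def
  set c := cross3 a0 a1 with hcdef
  -- basic dot product facts
  have hccpos : 0 < c ⬝ᵥ c := by
    rcases Function.ne_iff.mp hc with ⟨i, hi⟩
    have h1 : ∀ j, 0 ≤ c j * c j := fun j => mul_self_nonneg _
    have : 0 < c i * c i := mul_self_pos.mpr (by simpa using hi)
    calc (0:ℝ) < c i * c i := this
      _ ≤ ∑ j, c j * c j := Finset.single_le_sum (fun j _ => h1 j) (Finset.mem_univ i)
      _ = c ⬝ᵥ c := rfl
  have hca0 : c ⬝ᵥ a0 = 0 := by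
    simp [hcdef, cross3, cross_apply, dotProduct, Fin.sum_univ_three]; ring
  have hca1 : c ⬝ᵥ a1 = 0 := by
    simp [hcdef, cross3, cross_apply, dotProduct, Fin.sum_univ_three]; ring
  have hca : ∀ γ : Fin 2, cov r γ θ ⬝ᵥ c = 0 := by
    intro γ
    fin_cases γ
    · rw [dotProduct_comm]; exact hca0
    · rw [dotProduct_comm]; exact hca1
  -- norm facts
  have hnorm : norm3 c * norm3 c = c ⬝ᵥ c := Real.mul_self_sqrt hccpos.le
  have hnorm0 : norm3 c ≠ 0 := by
    intro h
    rw [h, mul_zero] at hnorm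
    exact hccpos.ne hnorm
  -- first fundamental form invertible
  have hdet : (fff r θ).det = c ⬝ᵥ c := by
    rw [Matrix.det_fin_two]
    simp [fff, hcdef, cross3, cross_apply, dotProduct, Fin.sum_univ_three, ← ha0def, ← ha1def]
    ring
  have hginv : (fff r θ)⁻¹ * fff r θ = 1 :=
    Matrix.nonsing_inv_mul _ (isUnit_iff_ne_zero.mpr (hdet ▸ hccpos.ne'))
  -- contrav dot cov = identity
  have hdotc : ∀ α β : Fin 2, contrav r α θ ⬝ᵥ cov r β θ = (1 : Matrix (Fin 2) (Fin 2) ℝ) α β := by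
    intro α β
    have h := congrFun (congrFun hginv α) β
    rw [Matrix.mul_apply] at h
    rw [contrav, sum_dotProduct2, ← h]
    simp only [smul_dotProduct, smul_eq_mul]
    rfl
  -- contrav dot c = 0
  have hdotcc : ∀ α : Fin 2, contrav r α θ ⬝ᵥ c = 0 := by
    intro α
    rw [contrav, sum_dotProduct2]
    simp only [smul_dotProduct, smul_eq_mul]
    exact Finset.sum_eq_zero fun γ _ => by rw [hca γ, mul_zero]
  -- column facts for M1
  set M1 : M3 := ∑ α, outer (cov r α θ) (contrav r α θ) with hM1def
  set nn := nhat r θ with hnndef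
  have hnnc : nn = (norm3 c)⁻¹ • c := rfl
  set M2 : M3 := 1 - outer nn nn with hM2def
  have hM1cov : ∀ β : Fin 2, M1 *ᵥ cov r β θ = cov r β θ := by
    intro β
    rw [hM1def, Fin.sum_univ_two, Matrix.add_mulVec, outer, outer,
      vecMulVec_mulVec', vecMulVec_mulVec', hdotc 0 β, hdotc 1 β]
    fin_cases β <;> simp [Matrix.one_apply]
  have hM1c : M1 *ᵥ c = 0 := by
    rw [hM1def, Fin.sum_univ_two, Matrix.add_mulVec, outer, outer,
      vecMulVec_mulVec', vecMulVec_mulVec', hdotcc 0, hdotcc 1]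
    simp
  have hnnd : ∀ β : Fin 2, nn ⬝ᵥ cov r β θ = 0 := by
    intro β
    rw [hnnc, smul_dotProduct]
    fin_cases β <;> simp [hca0, hca1, ← ha0def, ← ha1def]
  have hM2cov : ∀ β : Fin 2, M2 *ᵥ cov r β θ = cov r β θ := by
    intro β
    rw [hM2def, Matrix.sub_mulVec, Matrix.one_mulVec, outer, vecMulVec_mulVec', hnnd β]
    simp
  have hM2c : M2 *ᵥ c = 0 := by
    rw [hM2def, Matrix.sub_mulVec, Matrix.one_mulVec, outer, vecMulVec_mulVec', hnnc]
    have h1 : ((norm3 c)⁻¹ • c) ⬝ᵥ c = (norm3 c)⁻¹ * (c ⬝ᵥ c) := by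
      rw [smul_dotProduct]; rfl
    rw [h1, smul_smul]
    have h2 : (norm3 c)⁻¹ * (c ⬝ᵥ c) * (norm3 c)⁻¹ = 1 := by
      rw [← hnorm]; field_simp
    rw [h2, one_smul, sub_self]
  -- basis matrix
  set B : M3 := Matrix.of (fun i j => ![a0, a1, c] j i) with hBdef
  have hcol : ∀ j : Fin 3, (fun i => B i j) = ![a0, a1, c] j := by
    intro j; funext i; rfl
  have hdetB : B.det = c ⬝ᵥ c := by
    rw [Matrix.det_fin_three]
    simp [hBdef, hcdef, cross3, cross_apply, dotProduct, Fin.sum_univ_three]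
    ring
  have hBunit : IsUnit B.det := isUnit_iff_ne_zero.mpr (hdetB ▸ hccpos.ne')
  have hMB : M1 * B = M2 * B := by
    ext i j
    have h1 : ∀ (M : M3), (M * B) i j = (M *ᵥ (fun k => B k j)) i := by
      intro M; simp [Matrix.mul_apply, mulVec, dotProduct]
    rw [h1, h1, hcol j]
    fin_cases j
    · show (M1 *ᵥ cov r 0 θ) i = (M2 *ᵥ cov r 0 θ) i
      rw [hM1cov 0, hM2cov 0]
    · show (M1 *ᵥ cov r 1 θ) i = (M2 *ᵥ cov r 1 θ) i
      rw [hM1cov 1, hM2cov 1]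
    · show (M1 *ᵥ c) i = (M2 *ᵥ c) i
      rw [hM1c, hM2c]
  calc M1 = M1 * B * B⁻¹ := (Matrix.mul_nonsing_inv_cancel_right B M1 hBunit).symm
    _ = M2 * B * B⁻¹ := by rw [hMB]
    _ = M2 := Matrix.mul_nonsing_inv_cancel_right B M2 hBunit


/-- Ĥ = −n̂_{,α} ⊗ a^α equals (H ∘ r) with H = −∇n·P. -/
theorem weingarten_parametric_eq_ambient
    (r : V2 → V3) (hr : ContDiff ℝ (⊤ : ℕ∞) r)
    (hind : ∀ t, cross3 (cov r 0 t) (cov r 1 t) ≠ 0)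
    (n : V3 → V3) (hn : ContDiff ℝ (⊤ : ℕ∞) n)
    (hcomp : ∀ t, n (r t) = nhat r t)
    (θ : V2) (P : M3) (hP : P = 1 - outer (n (r θ)) (n (r θ))) :
    -(∑ α, outer (pdv2 α (fun t => n (r t)) θ) (contrav r α θ)) = -(jac n (r θ) * P) := by
  rw [hP, hcomp θ, ← proj_eq r θ (hind θ)]
  congr 1
  rw [Fin.sum_univ_two, Fin.sum_univ_two, Matrix.mul_add,
    pdv2_comp r hr n hn θ 0, pdv2_comp r hr n hn θ 1]
  show vecMulVec (jac n (r θ) *ᵥ cov r 0 θ) (contrav r 0 θ)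
      + vecMulVec (jac n (r θ) *ᵥ cov r 1 θ) (contrav r 1 θ) = _
  rw [← mul_vecMulVec, ← mul_vecMulVec]
  rfl
end
end

section
/- On a parametrized surface in ℝ³, the identity (a^α √det G)_{,α} = H n √det G holds, where H = h^α_α is the mean curvature. -/
open Matrix MeasureTheory
noncomputable section

namespace CDAux

lemma pd2_def (α : Fin 2) (f : V2 → ℝ) (θ : V2) :
    pd2 α f θ = fderiv ℝ f θ (Pi.single α 1) := rfl

lemma pd2_const (α : Fin 2) (c : ℝ) (θ : V2) : pd2 α (fun _ => c) θ = 0 := by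
  simp [pd2_def]

lemma pd2_mul (α : Fin 2) {f g : V2 → ℝ} {θ : V2} (hf : DifferentiableAt ℝ f θ)
    (hg : DifferentiableAt ℝ g θ) :
    pd2 α (fun t => f t * g t) θ = pd2 α f θ * g θ + f θ * pd2 α g θ := by
  rw [pd2_def, fderiv_fun_mul hf hg]
  simp [pd2_def]
  ring

lemma pd2_sub (α : Fin 2) {f g : V2 → ℝ} {θ : V2} (hf : DifferentiableAt ℝ f θ)
    (hg : DifferentiableAt ℝ g θ) :
    pd2 α (fun t => f t - g t) θ = pd2 α f θ - pd2 α g θ := by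
  rw [pd2_def, fderiv_fun_sub hf hg]
  simp [pd2_def]

lemma pd2_add (α : Fin 2) {f g : V2 → ℝ} {θ : V2} (hf : DifferentiableAt ℝ f θ)
    (hg : DifferentiableAt ℝ g θ) :
    pd2 α (fun t => f t + g t) θ = pd2 α f θ + pd2 α g θ := by
  rw [pd2_def, fderiv_fun_add hf hg]
  simp [pd2_def]

lemma cross3_0 (a b : V3) : cross3 a b 0 = a 1 * b 2 - a 2 * b 1 := rfl
lemma cross3_1 (a b : V3) : cross3 a b 1 = a 2 * b 0 - a 0 * b 2 := rfl
lemma cross3_2 (a b : V3) : cross3 a b 2 = a 0 * b 1 - a 1 * b 0 := rfl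

lemma contDiff_cov (r : V2 → V3) (hr : ContDiff ℝ (⊤ : ℕ∞) r) (α : Fin 2) (i : Fin 3) :
    ContDiff ℝ 1 (fun t => cov r α t i) := by
  have h1 : ContDiff ℝ 2 (fun t => r t i) := contDiff_pi.1 (hr.of_le (WithTop.coe_le_coe.2 le_top)) i
  have h2 : ContDiff ℝ 1 (fderiv ℝ (fun t => r t i)) := h1.fderiv_right (by norm_num)
  exact h2.clm_apply contDiff_const

lemma diffAt_cov (r : V2 → V3) (hr : ContDiff ℝ (⊤ : ℕ∞) r) (α : Fin 2) (θ : V2) (i : Fin 3) :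
    DifferentiableAt ℝ (fun t => cov r α t i) θ :=
  ((contDiff_cov r hr α i).differentiable one_ne_zero) θ


lemma diffAt_crossComp {f g : V2 → V3} {θ : V2}
    (hf : ∀ i, DifferentiableAt ℝ (fun t => f t i) θ)
    (hg : ∀ i, DifferentiableAt ℝ (fun t => g t i) θ) (i : Fin 3) :
    DifferentiableAt ℝ (fun t => cross3 (f t) (g t) i) θ := by
  fin_cases i <;>
    simp only [cross3_0, cross3_1, cross3_2] <;>
    exact ((hf _).mul (hg _)).sub ((hf _).mul (hg _))

lemma dotSelf_ne {v : V3} (hv : v ≠ 0) : v ⬝ᵥ v ≠ 0 := by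
  intro h
  exact hv ((dotProduct_self_eq_zero).1 h)

lemma dotSelf_nonneg (v : V3) : 0 ≤ v ⬝ᵥ v :=
  Finset.sum_nonneg fun i _ => mul_self_nonneg (v i)

lemma norm3_ne {v : V3} (hv : v ≠ 0) : norm3 v ≠ 0 := by
  simp only [norm3]
  intro h
  exact dotSelf_ne hv (by
    have := Real.sqrt_eq_zero (dotSelf_nonneg v) |>.1 h
    exact this)

lemma norm3_sq {v : V3} : norm3 v ^ 2 = v ⬝ᵥ v := by
  simp only [norm3]
  exact Real.sq_sqrt (dotSelf_nonneg v)

lemma diffAt_nhat (r : V2 → V3) (hr : ContDiff ℝ (⊤ : ℕ∞) r)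
    (hind : ∀ t, cross3 (cov r 0 t) (cov r 1 t) ≠ 0) (θ : V2) (i : Fin 3) :
    DifferentiableAt ℝ (fun t => nhat r t i) θ := by
  have hC : ∀ j, DifferentiableAt ℝ (fun t => cross3 (cov r 0 t) (cov r 1 t) j) θ :=
    diffAt_crossComp (diffAt_cov r hr 0 θ) (diffAt_cov r hr 1 θ)
  have hdot : DifferentiableAt ℝ
      (fun t => cross3 (cov r 0 t) (cov r 1 t) ⬝ᵥ cross3 (cov r 0 t) (cov r 1 t)) θ := by
    simp only [dotProduct, Fin.sum_univ_three]
    exact (((hC 0).mul (hC 0)).add ((hC 1).mul (hC 1))).add ((hC 2).mul (hC 2))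
  have hdne : cross3 (cov r 0 θ) (cov r 1 θ) ⬝ᵥ cross3 (cov r 0 θ) (cov r 1 θ) ≠ 0 :=
    dotSelf_ne (hind θ)
  have hnorm : DifferentiableAt ℝ (fun t => norm3 (cross3 (cov r 0 t) (cov r 1 t))) θ := by
    simp only [norm3]
    exact hdot.sqrt hdne
  have hnz : norm3 (cross3 (cov r 0 θ) (cov r 1 θ)) ≠ 0 := norm3_ne (hind θ)
  simp only [nhat, Pi.smul_apply, smul_eq_mul]
  exact (hnorm.inv hnz).mul (hC i)

lemma clairaut (r : V2 → V3) (hr : ContDiff ℝ (⊤ : ℕ∞) r) (θ : V2) :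
    pdv2 0 (cov r 1) θ = pdv2 1 (cov r 0) θ := by
  funext i
  have hf : ContDiff ℝ 2 (fun t => r t i) := contDiff_pi.1 (hr.of_le (WithTop.coe_le_coe.2 le_top)) i
  have hsymm : IsSymmSndFDerivAt ℝ (fun t => r t i) θ :=
    hf.contDiffAt.isSymmSndFDerivAt (by norm_num)
  have hd : DifferentiableAt ℝ (fderiv ℝ (fun t => r t i)) θ :=
    ((hf.fderiv_right (le_refl _)).differentiable one_ne_zero) θ
  have key : ∀ v w : V2, fderiv ℝ (fun t => fderiv ℝ (fun s => r s i) t v) θ w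
      = fderiv ℝ (fderiv ℝ (fun s => r s i)) θ w v := by
    intro v w
    rw [fderiv_clm_apply hd (differentiableAt_const v)]
    simp
  show fderiv ℝ (fun t => fderiv ℝ (fun s => r s i) t (Pi.single 1 1)) θ (Pi.single 0 1)
      = fderiv ℝ (fun t => fderiv ℝ (fun s => r s i) t (Pi.single 0 1)) θ (Pi.single 1 1)
  rw [key, key]
  exact hsymm _ _

lemma pdv2_cross {f g : V2 → V3} {θ : V2} (α : Fin 2)
    (hf : ∀ i, DifferentiableAt ℝ (fun t => f t i) θ)
    (hg : ∀ i, DifferentiableAt ℝ (fun t => g t i) θ) :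
    pdv2 α (fun t => cross3 (f t) (g t)) θ =
      cross3 (pdv2 α f θ) (g θ) + cross3 (f θ) (pdv2 α g θ) := by
  have hp : ∀ i, pdv2 α f θ i = pd2 α (fun t => f t i) θ := fun _ => rfl
  have hq : ∀ i, pdv2 α g θ i = pd2 α (fun t => g t i) θ := fun _ => rfl
  funext i
  have hc : ∀ j : Fin 3, (cross3 (pdv2 α f θ) (g θ) + cross3 (f θ) (pdv2 α g θ)) j
      = cross3 (pdv2 α f θ) (g θ) j + cross3 (f θ) (pdv2 α g θ) j := fun _ => rfl
  have c0 : pd2 α (fun t => cross3 (f t) (g t) 0) θ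
      = (cross3 (pdv2 α f θ) (g θ) + cross3 (f θ) (pdv2 α g θ)) 0 := by
    simp only [cross3_0, hc, hp, hq]
    rw [pd2_sub α ((hf _).fun_mul (hg _)) ((hf _).fun_mul (hg _)),
        pd2_mul α (hf _) (hg _), pd2_mul α (hf _) (hg _)]
    ring
  have c1 : pd2 α (fun t => cross3 (f t) (g t) 1) θ
      = (cross3 (pdv2 α f θ) (g θ) + cross3 (f θ) (pdv2 α g θ)) 1 := by
    simp only [cross3_1, hc, hp, hq]
    rw [pd2_sub α ((hf _).fun_mul (hg _)) ((hf _).fun_mul (hg _)),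
        pd2_mul α (hf _) (hg _), pd2_mul α (hf _) (hg _)]
    ring
  have c2 : pd2 α (fun t => cross3 (f t) (g t) 2) θ
      = (cross3 (pdv2 α f θ) (g θ) + cross3 (f θ) (pdv2 α g θ)) 2 := by
    simp only [cross3_2, hc, hp, hq]
    rw [pd2_sub α ((hf _).fun_mul (hg _)) ((hf _).fun_mul (hg _)),
        pd2_mul α (hf _) (hg _), pd2_mul α (hf _) (hg _)]
    ring
  fin_cases i
  · exact c0
  · exact c1
  · exact c2

lemma det_fff (r : V2 → V3) (t : V2) :
    (fff r t).det = cross3 (cov r 0 t) (cov r 1 t) ⬝ᵥ cross3 (cov r 0 t) (cov r 1 t) := by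
  simp only [Matrix.det_fin_two, fff, dotProduct, Fin.sum_univ_three,
    cross3_0, cross3_1, cross3_2]
  ring

lemma sqrt_det_fff (r : V2 → V3) (t : V2) :
    Real.sqrt (fff r t).det = norm3 (cross3 (cov r 0 t) (cov r 1 t)) := by
  rw [det_fff]; rfl

lemma inv_fff (r : V2 → V3) (t : V2) :
    (fff r t)⁻¹ = (norm3 (cross3 (cov r 0 t) (cov r 1 t)) ^ 2)⁻¹ •
      !![fff r t 1 1, -(fff r t 0 1); -(fff r t 1 0), fff r t 0 0] := by
  rw [Matrix.inv_def, Matrix.adjugate_fin_two, det_fff, ← norm3_sq, Ring.inverse_eq_inv']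

lemma contrav0_eq (r : V2 → V3) (t : V2) :
    contrav r 0 t = (norm3 (cross3 (cov r 0 t) (cov r 1 t)) ^ 2)⁻¹ •
      ((cov r 1 t ⬝ᵥ cov r 1 t) • cov r 0 t + (-(cov r 0 t ⬝ᵥ cov r 1 t)) • cov r 1 t) := by
  have h00 : (fff r t)⁻¹ 0 0
      = (norm3 (cross3 (cov r 0 t) (cov r 1 t)) ^ 2)⁻¹ * (cov r 1 t ⬝ᵥ cov r 1 t) := by
    rw [inv_fff]; simp [fff]
  have h01 : (fff r t)⁻¹ 0 1
      = (norm3 (cross3 (cov r 0 t) (cov r 1 t)) ^ 2)⁻¹ * (-(cov r 0 t ⬝ᵥ cov r 1 t)) := by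
    rw [inv_fff]; simp [fff]
  funext i
  simp only [contrav, Fin.sum_univ_two, h00, h01, Pi.add_apply, Pi.smul_apply, smul_eq_mul]
  ring

lemma contrav1_eq (r : V2 → V3) (t : V2) :
    contrav r 1 t = (norm3 (cross3 (cov r 0 t) (cov r 1 t)) ^ 2)⁻¹ •
      ((-(cov r 1 t ⬝ᵥ cov r 0 t)) • cov r 0 t + (cov r 0 t ⬝ᵥ cov r 0 t) • cov r 1 t) := by
  have h10 : (fff r t)⁻¹ 1 0
      = (norm3 (cross3 (cov r 0 t) (cov r 1 t)) ^ 2)⁻¹ * (-(cov r 1 t ⬝ᵥ cov r 0 t)) := by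
    rw [inv_fff]; simp [fff]
  have h11 : (fff r t)⁻¹ 1 1
      = (norm3 (cross3 (cov r 0 t) (cov r 1 t)) ^ 2)⁻¹ * (cov r 0 t ⬝ᵥ cov r 0 t) := by
    rw [inv_fff]; simp [fff]
  funext i
  simp only [contrav, Fin.sum_univ_two, h10, h11, Pi.add_apply, Pi.smul_apply, smul_eq_mul]
  ring

lemma key0_alg (p q : V3) (s : ℝ) (hs : s ≠ 0) :
    s • ((s ^ 2)⁻¹ • ((q ⬝ᵥ q) • p + (-(p ⬝ᵥ q)) • q)) = cross3 q (s⁻¹ • cross3 p q) := by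
  funext i
  fin_cases i
  · show s * ((s ^ 2)⁻¹ * ((q ⬝ᵥ q) * p 0 + (-(p ⬝ᵥ q)) * q 0)) = cross3 q (s⁻¹ • cross3 p q) 0
    simp only [cross3_0, cross3_1, cross3_2, Pi.smul_apply, smul_eq_mul, dotProduct,
      Fin.sum_univ_three]
    field_simp
    ring
  · show s * ((s ^ 2)⁻¹ * ((q ⬝ᵥ q) * p 1 + (-(p ⬝ᵥ q)) * q 1)) = cross3 q (s⁻¹ • cross3 p q) 1
    simp only [cross3_0, cross3_1, cross3_2, Pi.smul_apply, smul_eq_mul, dotProduct,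
      Fin.sum_univ_three]
    field_simp
    ring
  · show s * ((s ^ 2)⁻¹ * ((q ⬝ᵥ q) * p 2 + (-(p ⬝ᵥ q)) * q 2)) = cross3 q (s⁻¹ • cross3 p q) 2
    simp only [cross3_0, cross3_1, cross3_2, Pi.smul_apply, smul_eq_mul, dotProduct,
      Fin.sum_univ_three]
    field_simp
    ring

lemma key1_alg (p q : V3) (s : ℝ) (hs : s ≠ 0) :
    s • ((s ^ 2)⁻¹ • ((-(q ⬝ᵥ p)) • p + (p ⬝ᵥ p) • q)) = cross3 (s⁻¹ • cross3 p q) p := by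
  funext i
  fin_cases i
  · show s * ((s ^ 2)⁻¹ * ((-(q ⬝ᵥ p)) * p 0 + (p ⬝ᵥ p) * q 0)) = cross3 (s⁻¹ • cross3 p q) p 0
    simp only [cross3_0, cross3_1, cross3_2, Pi.smul_apply, smul_eq_mul, dotProduct,
      Fin.sum_univ_three]
    field_simp
    ring
  · show s * ((s ^ 2)⁻¹ * ((-(q ⬝ᵥ p)) * p 1 + (p ⬝ᵥ p) * q 1)) = cross3 (s⁻¹ • cross3 p q) p 1
    simp only [cross3_0, cross3_1, cross3_2, Pi.smul_apply, smul_eq_mul, dotProduct,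
      Fin.sum_univ_three]
    field_simp
    ring
  · show s * ((s ^ 2)⁻¹ * ((-(q ⬝ᵥ p)) * p 2 + (p ⬝ᵥ p) * q 2)) = cross3 (s⁻¹ • cross3 p q) p 2
    simp only [cross3_0, cross3_1, cross3_2, Pi.smul_apply, smul_eq_mul, dotProduct,
      Fin.sum_univ_three]
    field_simp
    ring

lemma key0 (r : V2 → V3) (hind : ∀ t, cross3 (cov r 0 t) (cov r 1 t) ≠ 0) (t : V2) :
    Real.sqrt (fff r t).det • contrav r 0 t = cross3 (cov r 1 t) (nhat r t) := by
  have hs : norm3 (cross3 (cov r 0 t) (cov r 1 t)) ≠ 0 := norm3_ne (hind t)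
  rw [sqrt_det_fff, contrav0_eq]
  exact key0_alg (cov r 0 t) (cov r 1 t) _ hs

lemma key1 (r : V2 → V3) (hind : ∀ t, cross3 (cov r 0 t) (cov r 1 t) ≠ 0) (t : V2) :
    Real.sqrt (fff r t).det • contrav r 1 t = cross3 (nhat r t) (cov r 0 t) := by
  have hs : norm3 (cross3 (cov r 0 t) (cov r 1 t)) ≠ 0 := norm3_ne (hind t)
  rw [sqrt_det_fff, contrav1_eq]
  exact key1_alg (cov r 0 t) (cov r 1 t) _ hs

lemma nhat_unit (r : V2 → V3) (hind : ∀ t, cross3 (cov r 0 t) (cov r 1 t) ≠ 0) (t : V2) :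
    nhat r t 0 * nhat r t 0 + nhat r t 1 * nhat r t 1 + nhat r t 2 * nhat r t 2 = 1 := by
  have hs : norm3 (cross3 (cov r 0 t) (cov r 1 t)) ≠ 0 := norm3_ne (hind t)
  have h2 : norm3 (cross3 (cov r 0 t) (cov r 1 t)) ^ 2
      = cross3 (cov r 0 t) (cov r 1 t) ⬝ᵥ cross3 (cov r 0 t) (cov r 1 t) := norm3_sq
  simp only [dotProduct, Fin.sum_univ_three] at h2
  simp only [nhat, Pi.smul_apply, smul_eq_mul]
  field_simp
  linear_combination -h2

lemma nhat_orth (r : V2 → V3) (hr : ContDiff ℝ (⊤ : ℕ∞) r)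
    (hind : ∀ t, cross3 (cov r 0 t) (cov r 1 t) ≠ 0) (θ : V2) (β : Fin 2) :
    nhat r θ 0 * pd2 β (fun t => nhat r t 0) θ + nhat r θ 1 * pd2 β (fun t => nhat r t 1) θ
      + nhat r θ 2 * pd2 β (fun t => nhat r t 2) θ = 0 := by
  have hd := diffAt_nhat r hr hind θ
  have hone : (fun t => nhat r t 0 * nhat r t 0 + nhat r t 1 * nhat r t 1
      + nhat r t 2 * nhat r t 2) = fun _ => (1 : ℝ) := funext fun t => nhat_unit r hind t
  have h0 : pd2 β (fun t => nhat r t 0 * nhat r t 0 + nhat r t 1 * nhat r t 1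
      + nhat r t 2 * nhat r t 2) θ = 0 := by rw [hone]; exact pd2_const _ _ _
  rw [pd2_add β (((hd 0).fun_mul (hd 0)).fun_add ((hd 1).fun_mul (hd 1))) ((hd 2).fun_mul (hd 2)),
      pd2_add β ((hd 0).fun_mul (hd 0)) ((hd 1).fun_mul (hd 1)),
      pd2_mul β (hd 0) (hd 0), pd2_mul β (hd 1) (hd 1), pd2_mul β (hd 2) (hd 2)] at h0
  linear_combination h0 / 2

lemma orth_c (r : V2 → V3) (hr : ContDiff ℝ (⊤ : ℕ∞) r)
    (hind : ∀ t, cross3 (cov r 0 t) (cov r 1 t) ≠ 0) (θ : V2) (β : Fin 2) :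
    cross3 (cov r 0 θ) (cov r 1 θ) ⬝ᵥ pdv2 β (nhat r) θ = 0 := by
  have hs : norm3 (cross3 (cov r 0 θ) (cov r 1 θ)) ≠ 0 := norm3_ne (hind θ)
  have h := nhat_orth r hr hind θ β
  have h2 : (norm3 (cross3 (cov r 0 θ) (cov r 1 θ)))⁻¹ *
      (cross3 (cov r 0 θ) (cov r 1 θ) ⬝ᵥ pdv2 β (nhat r) θ) = 0 := by
    calc (norm3 (cross3 (cov r 0 θ) (cov r 1 θ)))⁻¹ *
          (cross3 (cov r 0 θ) (cov r 1 θ) ⬝ᵥ pdv2 β (nhat r) θ)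
        = ((norm3 (cross3 (cov r 0 θ) (cov r 1 θ)))⁻¹ * cross3 (cov r 0 θ) (cov r 1 θ) 0)
            * pdv2 β (nhat r) θ 0
          + ((norm3 (cross3 (cov r 0 θ) (cov r 1 θ)))⁻¹ * cross3 (cov r 0 θ) (cov r 1 θ) 1)
            * pdv2 β (nhat r) θ 1
          + ((norm3 (cross3 (cov r 0 θ) (cov r 1 θ)))⁻¹ * cross3 (cov r 0 θ) (cov r 1 θ) 2)
            * pdv2 β (nhat r) θ 2 := by
          simp only [dotProduct, Fin.sum_univ_three]; ring
      _ = nhat r θ 0 * pd2 β (fun t => nhat r t 0) θ + nhat r θ 1 * pd2 β (fun t => nhat r t 1) θ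
          + nhat r θ 2 * pd2 β (fun t => nhat r t 2) θ := rfl
      _ = 0 := h
  rcases mul_eq_zero.1 h2 with h3 | h3
  · exact absurd (inv_eq_zero.1 h3) hs
  · exact h3

lemma invfff00 (r : V2 → V3) (t : V2) : (fff r t)⁻¹ 0 0
    = (norm3 (cross3 (cov r 0 t) (cov r 1 t)) ^ 2)⁻¹ * (cov r 1 t ⬝ᵥ cov r 1 t) := by
  rw [inv_fff]; simp [fff]

lemma invfff01 (r : V2 → V3) (t : V2) : (fff r t)⁻¹ 0 1
    = (norm3 (cross3 (cov r 0 t) (cov r 1 t)) ^ 2)⁻¹ * (-(cov r 0 t ⬝ᵥ cov r 1 t)) := by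
  rw [inv_fff]; simp [fff]

lemma invfff10 (r : V2 → V3) (t : V2) : (fff r t)⁻¹ 1 0
    = (norm3 (cross3 (cov r 0 t) (cov r 1 t)) ^ 2)⁻¹ * (-(cov r 1 t ⬝ᵥ cov r 0 t)) := by
  rw [inv_fff]; simp [fff]

lemma invfff11 (r : V2 → V3) (t : V2) : (fff r t)⁻¹ 1 1
    = (norm3 (cross3 (cov r 0 t) (cov r 1 t)) ^ 2)⁻¹ * (cov r 0 t ⬝ᵥ cov r 0 t) := by
  rw [inv_fff]; simp [fff]

lemma meanCurv_eq (r : V2 → V3) (t : V2) :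
    meanCurv r t = -((norm3 (cross3 (cov r 0 t) (cov r 1 t)) ^ 2)⁻¹ *
      ((cov r 1 t ⬝ᵥ cov r 1 t) * (cov r 0 t ⬝ᵥ pdv2 0 (nhat r) t)
        - (cov r 0 t ⬝ᵥ cov r 1 t) * (cov r 1 t ⬝ᵥ pdv2 0 (nhat r) t)
        - (cov r 1 t ⬝ᵥ cov r 0 t) * (cov r 0 t ⬝ᵥ pdv2 1 (nhat r) t)
        + (cov r 0 t ⬝ᵥ cov r 0 t) * (cov r 1 t ⬝ᵥ pdv2 1 (nhat r) t))) := by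
  simp only [meanCurv, Fin.sum_univ_two, sff, invfff00, invfff01, invfff10, invfff11]
  ring

lemma final_algebra (p q u v : V3) (s : ℝ) (hs : s ≠ 0)
    (hs2 : s ^ 2 = cross3 p q ⬝ᵥ cross3 p q)
    (o0 : cross3 p q ⬝ᵥ u = 0) (o1 : cross3 p q ⬝ᵥ v = 0) :
    cross3 q u + cross3 v p =
      (-((s ^ 2)⁻¹ * ((q ⬝ᵥ q) * (p ⬝ᵥ u) - (p ⬝ᵥ q) * (q ⬝ᵥ u) - (q ⬝ᵥ p) * (p ⬝ᵥ v)
        + (p ⬝ᵥ p) * (q ⬝ᵥ v)))) • cross3 p q := by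
  simp only [dotProduct, Fin.sum_univ_three, cross3_0, cross3_1, cross3_2] at o0 o1 hs2
  funext i
  fin_cases i
  · show cross3 q u 0 + cross3 v p 0 = _ * cross3 p q 0
    simp only [cross3_0, cross3_1, cross3_2, dotProduct, Fin.sum_univ_three]
    field_simp
    linear_combination ((q 1 * u 2 - q 2 * u 1) + (v 1 * p 2 - v 2 * p 1)) * hs2
      + (q 1 * (p 0 * q 1 - p 1 * q 0) - q 2 * (p 2 * q 0 - p 0 * q 2)) * o0
      - (p 1 * (p 0 * q 1 - p 1 * q 0) - p 2 * (p 2 * q 0 - p 0 * q 2)) * o1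
  · show cross3 q u 1 + cross3 v p 1 = _ * cross3 p q 1
    simp only [cross3_0, cross3_1, cross3_2, dotProduct, Fin.sum_univ_three]
    field_simp
    linear_combination ((q 2 * u 0 - q 0 * u 2) + (v 2 * p 0 - v 0 * p 2)) * hs2
      + (q 2 * (p 1 * q 2 - p 2 * q 1) - q 0 * (p 0 * q 1 - p 1 * q 0)) * o0
      - (p 2 * (p 1 * q 2 - p 2 * q 1) - p 0 * (p 0 * q 1 - p 1 * q 0)) * o1
  · show cross3 q u 2 + cross3 v p 2 = _ * cross3 p q 2
    simp only [cross3_0, cross3_1, cross3_2, dotProduct, Fin.sum_univ_three]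
    field_simp
    linear_combination ((q 0 * u 1 - q 1 * u 0) + (v 0 * p 1 - v 1 * p 0)) * hs2
      + (q 0 * (p 2 * q 0 - p 0 * q 2) - q 1 * (p 1 * q 2 - p 2 * q 1)) * o0
      - (p 0 * (p 2 * q 0 - p 0 * q 2) - p 1 * (p 1 * q 2 - p 2 * q 1)) * o1

end CDAux

/-- (a^α √det G)_{,α} = H n √det G, H the mean curvature. -/
theorem contravariant_density_derivative
    (r : V2 → V3) (hr : ContDiff ℝ (⊤ : ℕ∞) r)
    (hind : ∀ t, cross3 (cov r 0 t) (cov r 1 t) ≠ 0)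
    (θ : V2) :
    (∑ α, pdv2 α (fun t => Real.sqrt (fff r t).det • contrav r α t) θ)
      = (meanCurv r θ * Real.sqrt (fff r θ).det) • nhat r θ := by
  have hdcov := fun (α : Fin 2) => CDAux.diffAt_cov r hr α θ
  have hdn := CDAux.diffAt_nhat r hr hind θ
  have e0 : (fun t => Real.sqrt (fff r t).det • contrav r 0 t)
      = fun t => cross3 (cov r 1 t) (nhat r t) := funext fun t => CDAux.key0 r hind t
  have e1 : (fun t => Real.sqrt (fff r t).det • contrav r 1 t)
      = fun t => cross3 (nhat r t) (cov r 0 t) := funext fun t => CDAux.key1 r hind t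
  rw [Fin.sum_univ_two, e0, e1,
    CDAux.pdv2_cross 0 (hdcov 1) hdn, CDAux.pdv2_cross 1 hdn (hdcov 0),
    CDAux.clairaut r hr θ]
  have hanti : cross3 (pdv2 1 (cov r 0) θ) (nhat r θ)
      + cross3 (nhat r θ) (pdv2 1 (cov r 0) θ) = (0 : V3) :=
    cross_anticomm' (pdv2 1 (cov r 0) θ) (nhat r θ)
  have step : (cross3 (pdv2 1 (cov r 0) θ) (nhat r θ)
        + cross3 (cov r 1 θ) (pdv2 0 (nhat r) θ))
      + (cross3 (pdv2 1 (nhat r) θ) (cov r 0 θ)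
        + cross3 (nhat r θ) (pdv2 1 (cov r 0) θ))
      = cross3 (cov r 1 θ) (pdv2 0 (nhat r) θ) + cross3 (pdv2 1 (nhat r) θ) (cov r 0 θ) := by
    calc (cross3 (pdv2 1 (cov r 0) θ) (nhat r θ)
          + cross3 (cov r 1 θ) (pdv2 0 (nhat r) θ))
        + (cross3 (pdv2 1 (nhat r) θ) (cov r 0 θ)
          + cross3 (nhat r θ) (pdv2 1 (cov r 0) θ))
        = (cross3 (cov r 1 θ) (pdv2 0 (nhat r) θ) + cross3 (pdv2 1 (nhat r) θ) (cov r 0 θ))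
          + (cross3 (pdv2 1 (cov r 0) θ) (nhat r θ)
            + cross3 (nhat r θ) (pdv2 1 (cov r 0) θ)) := by abel
      _ = _ := by rw [hanti, add_zero]
  rw [step]
  have hs : norm3 (cross3 (cov r 0 θ) (cov r 1 θ)) ≠ 0 := CDAux.norm3_ne (hind θ)
  rw [CDAux.meanCurv_eq, CDAux.sqrt_det_fff]
  have key := CDAux.final_algebra (cov r 0 θ) (cov r 1 θ) (pdv2 0 (nhat r) θ)
    (pdv2 1 (nhat r) θ) (norm3 (cross3 (cov r 0 θ) (cov r 1 θ))) hs CDAux.norm3_sq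
    (CDAux.orth_c r hr hind θ 0) (CDAux.orth_c r hr hind θ 1)
  rw [key]
  have hn : nhat r θ = (norm3 (cross3 (cov r 0 θ) (cov r 1 θ)))⁻¹ •
      cross3 (cov r 0 θ) (cov r 1 θ) := rfl
  rw [hn, smul_smul]
  congr 1
  rw [mul_assoc, mul_inv_cancel₀ hs, mul_one]
end
end

section
/- For a vector field v and a second-order tensor field T on a surface S ⊂ ℝ³, the product rule div(v × T) = v × div(T) + ∇_S v ⨯ Tᵀ holds, where v × T is defined by (v × T) = v_i T_{lk} (e^i × e^l) ⊗ e^k and V ⨯ T is the scalar-cross product V_{ij} T_{lk} (e^j·e^l)(e^i × e^k). -/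
open Matrix MeasureTheory
noncomputable section

/-!
Column by column, `v × T` is the cross product of `v` with the columns of `T`, so the Leibniz
rule for the cross product splits `∂ₖ(v × T)` into `∂ₖv × T + v × ∂ₖT`. Contracted with `P`, the
second part is `v × (∇T : P)` and the first is the scalar-cross product `∇v P ⨯ Tᵀ`, where the
order of `P`'s indices comes out transposed; it does not matter because `P = 1 - n ⊗ n` is
symmetric. The curvature term passes through since `(v × T) n = v × (T n)`.
-/

lemma cross3_eq_sum (a b : V3) :
    cross3 a b = ∑ i, ∑ l, (a i * b l) • cross3 (e3 i) (e3 l) := by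
  ext m
  fin_cases m <;> simp [cross3, cross_apply, e3, Fin.sum_univ_three, Pi.single_apply] <;> ring

lemma crossT_apply (v : V3) (T : M3) (i j : Fin 3) :
    crossT v T i j = cross3 v (Tᵀ j) i := by
  simp [crossT, Matrix.sum_apply, outer, vecMulVec_apply, e3, Pi.single_apply, cross3_eq_sum v,
    Finset.sum_apply]

lemma scalarCross_eq_sum (A B : M3) : scalarCross A B = ∑ j, cross3 (Aᵀ j) (B j) := by
  simp only [scalarCross, e3, single_dotProduct, Pi.single_apply, mul_one, mul_ite,
    mul_zero, ite_smul, zero_smul, Finset.sum_ite_irrel, Finset.sum_const_zero, Finset.sum_ite_eq,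
    Finset.mem_univ, ↓reduceIte, cross3_eq_sum (Aᵀ _), transpose_apply]
  exact Finset.sum_comm

lemma crossT_mulVec (v : V3) (T : M3) (n : V3) : crossT v T *ᵥ n = cross3 v (T *ᵥ n) := by
  ext i
  simp [mulVec_eq_sum, crossT_apply, cross3, Finset.sum_apply]

def pdv (k : Fin 3) (u : V3 → V3) (x : V3) : V3 := fun a => pd k (fun y => u y a) x

lemma pd_sub (k : Fin 3) {f g : V3 → ℝ} {x : V3}
    (hf : DifferentiableAt ℝ f x) (hg : DifferentiableAt ℝ g x) :
    pd k (fun y => f y - g y) x = pd k f x - pd k g x := by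
  simp [pd, fderiv_fun_sub hf hg]

lemma pd_mul (k : Fin 3) {f g : V3 → ℝ} {x : V3}
    (hf : DifferentiableAt ℝ f x) (hg : DifferentiableAt ℝ g x) :
    pd k (fun y => f y * g y) x = pd k f x * g x + f x * pd k g x := by
  simp only [pd, fderiv_fun_mul hf hg, _root_.add_apply, _root_.smul_apply, smul_eq_mul]
  ring

lemma pdv_cross3 (k : Fin 3) {u w : V3 → V3} {x : V3}
    (hu : ∀ a, DifferentiableAt ℝ (fun y => u y a) x)
    (hw : ∀ a, DifferentiableAt ℝ (fun y => w y a) x) :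
    pdv k (fun y => cross3 (u y) (w y)) x = cross3 (pdv k u x) (w x) + cross3 (u x) (pdv k w x) := by
  have hmul : ∀ a b, DifferentiableAt ℝ (fun y => u y a * w y b) x :=
    fun a b => (hu a).mul (hw b)
  ext i
  fin_cases i <;>
    simp [pdv, cross3, cross_apply, pd_sub k (hmul _ _) (hmul _ _), pd_mul k (hu _) (hw _)] <;> ring

def gradContract (T : V3 → M3) (P : M3) (x : V3) : V3 :=
  fun i => ∑ j, ∑ k, pd k (fun y => T y i j) x * P j k

def surfDiv (P : M3) (H : ℝ) (n : V3) (T : V3 → M3) (x : V3) : V3 :=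
  gradContract T P x + H • (T x *ᵥ n)

lemma gradContract_eq_sum (T : V3 → M3) (P : M3) (x : V3) :
    gradContract T P x = ∑ j, ∑ k, P j k • pdv k (fun y => (T y)ᵀ j) x := by
  ext i
  simp [gradContract, pdv, Finset.sum_apply, mul_comm]

lemma transpose_jac_mul_apply (v : V3 → V3) (x : V3) (P : M3) (j : Fin 3) :
    (jac v x * Pᵀ)ᵀ j = ∑ k, P j k • pdv k v x := by
  ext a
  simp [jac, pdv, mul_apply, Finset.sum_apply, mul_comm]

lemma gradContract_crossT (P : M3) {x : V3} {v : V3 → V3} {T : V3 → M3}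
    (hv : ∀ a, DifferentiableAt ℝ (fun y => v y a) x)
    (hT : ∀ l j, DifferentiableAt ℝ (fun y => T y l j) x) :
    gradContract (fun y => crossT (v y) (T y)) P x
      = cross3 (v x) (gradContract T P x) + scalarCross (jac v x * Pᵀ) (T x)ᵀ := by
  have hcol : ∀ j, (fun y => (crossT (v y) (T y))ᵀ j) = fun y => cross3 (v y) ((T y)ᵀ j) := by
    intro j; funext y i; exact crossT_apply _ _ i j
  have hleibniz : ∀ j k, pdv k (fun y => cross3 (v y) ((T y)ᵀ j)) x
      = cross3 (pdv k v x) ((T x)ᵀ j) + cross3 (v x) (pdv k (fun y => (T y)ᵀ j) x) :=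
    fun j k => pdv_cross3 k hv (fun l => hT l j)
  simp only [gradContract_eq_sum, hcol, hleibniz, scalarCross_eq_sum, transpose_jac_mul_apply]
  simp [cross3, map_sum, smul_add, Finset.sum_add_distrib, add_comm]

lemma surfDiv_crossT (P : M3) (H : ℝ) (n : V3) {x : V3} {v : V3 → V3} {T : V3 → M3}
    (hv : ∀ a, DifferentiableAt ℝ (fun y => v y a) x)
    (hT : ∀ l j, DifferentiableAt ℝ (fun y => T y l j) x) :
    surfDiv P H n (fun y => crossT (v y) (T y)) x
      = cross3 (v x) (surfDiv P H n T x) + scalarCross (jac v x * Pᵀ) (T x)ᵀ := by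
  rw [surfDiv, surfDiv, gradContract_crossT P hv hT, crossT_mulVec]
  simp only [cross3, map_add, map_smul]
  abel

lemma transpose_one_sub_outer_self (n : V3) : (1 - outer n n)ᵀ = 1 - outer n n := by
  simp [outer, transpose_sub, transpose_vecMulVec]

theorem divergence_product_rule_cross_general
    (n : V3) (P : M3) (hP : P = 1 - outer n n)
    (H : ℝ) (x : V3)
    (v : V3 → V3) (hv : Differentiable ℝ v)
    (T : V3 → M3) (hT : ∀ i j, Differentiable ℝ fun y => T y i j) :
    ((fun i => ∑ j, ∑ k, pd k (fun y => crossT (v y) (T y) i j) x * P j k)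
        + H • (crossT (v x) (T x) *ᵥ n))
      = cross3 (v x)
          ((fun i => ∑ j, ∑ k, pd k (fun y => T y i j) x * P j k) + H • (T x *ᵥ n))
        + scalarCross (jac v x * P) (T x)ᵀ := by
  have hPsymm : Pᵀ = P := hP ▸ transpose_one_sub_outer_self n
  have h := surfDiv_crossT P H n (fun a => differentiableAt_pi.mp (hv x) a) (fun l j => hT l j x)
  rwa [hPsymm] at h

/-- product rule div(v × T) = v × div(T) + ∇_S v ⨯ Tᵀ. -/
theorem divergence_product_rule_cross
    (n : V3) (hn : n ⬝ᵥ n = 1) (P : M3) (hP : P = 1 - outer n n)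
    (H : ℝ) (x : V3)
    (v : V3 → V3) (hv : Differentiable ℝ v)
    (T : V3 → M3) (hT : ∀ i j, Differentiable ℝ fun y => T y i j) :
    ((fun i => ∑ j, ∑ k, pd k (fun y => crossT (v y) (T y) i j) x * P j k)
        + H • (crossT (v x) (T x) *ᵥ n))
      = cross3 (v x)
          ((fun i => ∑ j, ∑ k, pd k (fun y => T y i j) x * P j k) + H • (T x *ᵥ n))
        + scalarCross (jac v x * P) (T x)ᵀ :=
  divergence_product_rule_cross_general n P hP H x v hv T hT
end
end

section
/- Let u : ℝ³ → ℝ³ be a displacement field on a surface S with parametrization r, and û = u ∘ r. Then the parametric linearized change-of-metric tensor γ_{αβ}(û) = ½(û_{,β}·a_α + û_{,α}·a_β), expressed as γ̂ = γ_{αβ} a^α ⊗ a^β, equals the composition with r of the parametrization-free tensor γ(u) = ½ P·(∇u + (∇u)ᵀ)·P. -/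
open Matrix MeasureTheory
noncomputable section

-- chain rule lemma
lemma cov_eq (r : V2 → V3) (hr : ContDiff ℝ (⊤ : ℕ∞) r) (θ : V2) (α : Fin 2) :
    cov r α θ = fun i => fderiv ℝ r θ (Pi.single α 1) i := by
  funext i
  have hD : HasFDerivAt r (fderiv ℝ r θ) θ := (hr.differentiable (by simp) θ).hasFDerivAt
  have h : HasFDerivAt (fun t => r t i)
      ((ContinuousLinearMap.proj i).comp (fderiv ℝ r θ)) θ :=
    (ContinuousLinearMap.proj (R := ℝ) (φ := fun _ : Fin 3 => ℝ) i).hasFDerivAt.comp θ hD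
  simp [cov, pdv2, pd2, h.fderiv]

lemma jac_eq (u : V3 → V3) (hu : ContDiff ℝ (⊤ : ℕ∞) u) (x : V3) (i j : Fin 3) :
    jac u x i j = fderiv ℝ u x (Pi.single j 1) i := by
  have hD : HasFDerivAt u (fderiv ℝ u x) x := (hu.differentiable (by simp) x).hasFDerivAt
  have h : HasFDerivAt (fun y => u y i)
      ((ContinuousLinearMap.proj i).comp (fderiv ℝ u x)) x :=
    (ContinuousLinearMap.proj (R := ℝ) (φ := fun _ : Fin 3 => ℝ) i).hasFDerivAt.comp x hD
  simp [jac, pd, h.fderiv]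

lemma chain_rule (r : V2 → V3) (hr : ContDiff ℝ (⊤ : ℕ∞) r) (u : V3 → V3) (hu : ContDiff ℝ (⊤ : ℕ∞) u)
    (θ : V2) (α : Fin 2) :
    pdv2 α (fun t => u (r t)) θ = (jac u (r θ)).mulVec (cov r α θ) := by
  funext i
  have hD : HasFDerivAt r (fderiv ℝ r θ) θ := (hr.differentiable (by simp) θ).hasFDerivAt
  have hJ : HasFDerivAt u (fderiv ℝ u (r θ)) (r θ) :=
    (hu.differentiable (by simp) (r θ)).hasFDerivAt
  have hcomp : HasFDerivAt (fun t => u (r t))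
      ((fderiv ℝ u (r θ)).comp (fderiv ℝ r θ)) θ := hJ.comp θ hD
  have hci : HasFDerivAt (fun t => u (r t) i)
      ((ContinuousLinearMap.proj i).comp ((fderiv ℝ u (r θ)).comp (fderiv ℝ r θ))) θ :=
    (ContinuousLinearMap.proj (R := ℝ) (φ := fun _ : Fin 3 => ℝ) i).hasFDerivAt.comp θ hcomp
  have lhs : pdv2 α (fun t => u (r t)) θ i
      = fderiv ℝ u (r θ) (fderiv ℝ r θ (Pi.single α 1)) i := by
    simp [pdv2, pd2, hci.fderiv]
  rw [lhs]
  have hv : (fderiv ℝ r θ (Pi.single α 1))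
      = ∑ j, (fderiv ℝ r θ (Pi.single α 1)) j • (Pi.single j 1 : V3) := by
    funext k
    simp [Finset.sum_apply, Pi.single_apply]
  conv_lhs => rw [hv]
  rw [map_sum]
  simp only [_root_.map_smul]
  rw [Finset.sum_apply]
  simp only [Pi.smul_apply, smul_eq_mul]
  rw [Matrix.mulVec, dotProduct]
  congr 1
  funext j
  rw [jac_eq u hu, cov_eq r hr]
  ring
set_option maxHeartbeats 2000000 in
lemma assemble (M P : M3) (v w : Fin 2 → V3)
    (hQ : ∑ α, outer (w α) (v α) = P) (hP : Pᵀ = P) :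
    (∑ α, ∑ β, ((1/2 : ℝ) * (v α ⬝ᵥ M.mulVec (v β) + v β ⬝ᵥ M.mulVec (v α)))
        • outer (w α) (w β)) = (1/2 : ℝ) • (P * (M + Mᵀ) * P) := by
  have h2 : P * (M + Mᵀ) * P = P * (M + Mᵀ) * Pᵀ := by rw [hP]
  rw [h2, ← hQ]
  ext i j
  simp only [outer, vecMulVec, Matrix.mul_apply, Matrix.mulVec, dotProduct,
    Fin.sum_univ_two, Fin.sum_univ_three, Matrix.transpose_apply, Matrix.add_apply,
    Matrix.smul_apply, Matrix.sum_apply, Matrix.of_apply, smul_eq_mul, Pi.smul_apply]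
  ring
set_option maxHeartbeats 4000000 in
lemma projector (r : V2 → V3) (θ : V2)
    (hind : cross3 (cov r 0 θ) (cov r 1 θ) ≠ 0) :
    ∑ α, outer (contrav r α θ) (cov r α θ) = 1 - outer (nhat r θ) (nhat r θ) := by
  have hd : cross3 (cov r 0 θ) (cov r 1 θ) ⬝ᵥ cross3 (cov r 0 θ) (cov r 1 θ) ≠ 0 := by
    intro h
    exact hind ((dotProduct_self_eq_zero).mp h)
  have hdpos : 0 ≤ cross3 (cov r 0 θ) (cov r 1 θ) ⬝ᵥ cross3 (cov r 0 θ) (cov r 1 θ) :=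
    Finset.sum_nonneg fun i _ => mul_self_nonneg _
  have hn : ∀ i k : Fin 3, nhat r θ i * nhat r θ k
      = (cross3 (cov r 0 θ) (cov r 1 θ) ⬝ᵥ cross3 (cov r 0 θ) (cov r 1 θ))⁻¹
        * (cross3 (cov r 0 θ) (cov r 1 θ) i * cross3 (cov r 0 θ) (cov r 1 θ) k) := by
    intro i k
    simp only [nhat, Pi.smul_apply, smul_eq_mul, norm3]
    rw [show ∀ s x y : ℝ, s⁻¹ * x * (s⁻¹ * y) = (s * s)⁻¹ * (x * y) from by
      intro s x y; rw [mul_inv]; ring]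
    rw [Real.mul_self_sqrt hdpos]
  have hdet : (fff r θ).det
      = cross3 (cov r 0 θ) (cov r 1 θ) ⬝ᵥ cross3 (cov r 0 θ) (cov r 1 θ) := by
    rw [Matrix.det_fin_two]
    simp [fff, cross3, cross_apply, dotProduct, Fin.sum_univ_three]
    ring
  have hdet0 : (fff r θ).det ≠ 0 := by rw [hdet]; exact hd
  have hinv : (fff r θ)⁻¹ = (fff r θ).det⁻¹ •
      Matrix.of ![![fff r θ 1 1, -(fff r θ 0 1)], ![-(fff r θ 1 0), fff r θ 0 0]] := by
    rw [Matrix.inv_def, Matrix.adjugate_fin_two, Ring.inverse_eq_inv']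
  have hcc := hd
  simp only [cross3, cross_apply, dotProduct, Fin.sum_univ_three] at hcc
  norm_num at hcc
  ext i k
  simp only [Matrix.sum_apply, outer, vecMulVec, Matrix.of_apply, Matrix.sub_apply,
    Matrix.one_apply, contrav, hinv, Fin.sum_univ_two, Finset.sum_apply,
    Pi.smul_apply, smul_eq_mul, Matrix.smul_apply, hdet, hn]
  have hDinv := mul_inv_cancel₀ hd
  generalize (cross3 (cov r 0 θ) (cov r 1 θ) ⬝ᵥ cross3 (cov r 0 θ) (cov r 1 θ))⁻¹ = t at hDinv ⊢
  simp only [fff, cross3, cross_apply, dotProduct, Fin.sum_univ_three] at hDinv ⊢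
  have h2 : (⟨2, by norm_num⟩ : Fin 3) = 2 := rfl
  fin_cases i <;> fin_cases k
  all_goals simp only [Fin.zero_eta, Fin.mk_one, h2, Fin.isValue, Matrix.cons_val_two, Matrix.tail_cons, Matrix.head_cons, Matrix.cons_val_zero, Matrix.cons_val_one, Fin.reduceFinMk, Matrix.one_apply_eq, Matrix.one_apply_ne, ne_eq, Fin.reduceEq, not_false_eq_true, if_true, if_false] at hDinv ⊢
  · linear_combination hDinv
  · ring
  · ring
  · ring
  · linear_combination hDinv
  · ring
  · ring
  · ring
  · linear_combination hDinv
/-- the parametric linearized change-of-metric tensor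
γ̂ = γ_{αβ} a^α ⊗ a^β, γ_{αβ} = ½(û_{,β}·a_α + û_{,α}·a_β),
equals (γ(u)) ∘ r with γ(u) = ½ P·(∇u + (∇u)ᵀ)·P. -/
theorem change_of_metric_parametrization_free
    (r : V2 → V3) (hr : ContDiff ℝ (⊤ : ℕ∞) r)
    (hind : ∀ t, cross3 (cov r 0 t) (cov r 1 t) ≠ 0)
    (u : V3 → V3) (hu : ContDiff ℝ (⊤ : ℕ∞) u)
    (θ : V2) (P : M3) (hP : P = 1 - outer (nhat r θ) (nhat r θ)) :
    (∑ α, ∑ β,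
        ((1 / 2 : ℝ) * (pdv2 β (fun t => u (r t)) θ ⬝ᵥ cov r α θ
            + pdv2 α (fun t => u (r t)) θ ⬝ᵥ cov r β θ))
          • outer (contrav r α θ) (contrav r β θ))
      = (1 / 2 : ℝ) • (P * (jac u (r θ) + (jac u (r θ))ᵀ) * P) := by
  have hQ : ∑ α, outer (contrav r α θ) (cov r α θ) = P := by
    rw [hP]; exact projector r θ (hind θ)
  have hPs : Pᵀ = P := by
    rw [hP]
    ext i j
    simp [outer, vecMulVec, Matrix.transpose_apply, Matrix.sub_apply, Matrix.one_apply]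
    rw [mul_comm]
    rcases eq_or_ne i j with h | h
    · simp [h]
    · simp [h, Ne.symm h]
  refine Eq.trans ?_ (assemble (jac u (r θ)) P (fun α => cov r α θ)
    (fun α => contrav r α θ) hQ hPs)
  refine Finset.sum_congr rfl fun α _ => Finset.sum_congr rfl fun β _ => ?_
  rw [chain_rule r hr u hu θ α, chain_rule r hr u hu θ β,
    dotProduct_comm ((jac u (r θ)) *ᵥ cov r β θ) (cov r α θ),
    dotProduct_comm ((jac u (r θ)) *ᵥ cov r α θ) (cov r β θ)]
end
end

section
/- For the tangential projector P and the stress tensor σ = N + n ⊗ S on a surface, with tangential N = N^{αβ} g_α⊗g_β and tangential vector S = S^α g_α, the scalar-cross product satisfies P ⨯ σᵀ = [Nᵀ]_× + S × n, where [T]_× = T_{ij} e^i × e^j. -/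
open Matrix MeasureTheory
noncomputable section

/-! The scalar-cross product is the vector invariant of the matrix product, `A ⨯ B = [A B]_×`.
The projector fixes the tangent vectors `g_β`, hence `N` and `S`, so `P σᵀ = Nᵀ + S ⊗ n`;
and the vector invariant of a dyad is the cross product, `[a ⊗ b]_× = a × b`. -/

lemma e3_dotProduct_e3 (j l : Fin 3) : e3 j ⬝ᵥ e3 l = if j = l then 1 else 0 := by
  simp [e3, Pi.single_apply, eq_comm]

lemma scalarCross_eq_vecInv_mul (A B : M3) : scalarCross A B = vecInv (A * B) := by
  simp only [scalarCross, vecInv, e3_dotProduct_e3, mul_ite, mul_one, mul_zero, ite_smul,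
    zero_smul, Finset.sum_ite_irrel, Finset.sum_const_zero, Finset.sum_ite_eq, Finset.mem_univ,
    if_true, mul_apply, Finset.sum_smul]
  exact Finset.sum_congr rfl fun i _ => Finset.sum_comm

lemma vecInv_add (A B : M3) : vecInv (A + B) = vecInv A + vecInv B := by
  simp only [vecInv, Matrix.add_apply, add_smul, Finset.sum_add_distrib]

lemma vecInv_outer (a b : V3) : vecInv (outer a b) = cross3 a b := by
  conv_rhs => rw [pi_eq_sum_univ' a, pi_eq_sum_univ' b]
  simp only [vecInv, outer, cross3, e3, vecMulVec_apply, map_sum, map_smul, LinearMap.sum_apply,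
    LinearMap.smul_apply, Finset.smul_sum, smul_smul]
  rw [Finset.sum_comm]
  simp only [mul_comm]

lemma sum_vecMulVec_mulVec_of_dual {ι n R : Type*} [Fintype ι] [DecidableEq ι] [Fintype n]
    [CommSemiring R] (g gU : ι → n → R) (hdual : ∀ α β, gU α ⬝ᵥ g β = if α = β then 1 else 0)
    (β : ι) : (∑ α, vecMulVec (g α) (gU α)) *ᵥ g β = g β := by
  simp [sum_mulVec, vecMulVec_mulVec, hdual]

/-- for σ = N + n ⊗ S with tangential N = N^{αβ} g_α⊗g_β and
tangential S = S^α g_α, one has P ⨯ σᵀ = [Nᵀ]_× + S × n. -/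
theorem projector_scalarCross_stress
    (g gU : Fin 2 → V3)
    (hdual : ∀ α β, gU α ⬝ᵥ g β = if α = β then (1 : ℝ) else 0)
    (n : V3)
    (Nc : Fin 2 → Fin 2 → ℝ) (Sc : Fin 2 → ℝ)
    (N : M3) (hN : N = ∑ α, ∑ β, Nc α β • outer (g α) (g β))
    (S : V3) (hS : S = ∑ α, Sc α • g α)
    (P : M3) (hP : P = ∑ α, outer (g α) (gU α))
    (σ : M3) (hσ : σ = N + outer n S) :
    scalarCross P σᵀ = vecInv Nᵀ + cross3 S n := by
  have hPg : ∀ β, P *ᵥ g β = g β := hP ▸ sum_vecMulVec_mulVec_of_dual g gU hdual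
  have hPN : P * Nᵀ = Nᵀ := by
    simp only [hN, outer, transpose_sum, transpose_smul, transpose_vecMulVec, Matrix.mul_sum,
      Matrix.mul_smul, mul_vecMulVec, hPg]
  have hPS : P *ᵥ S = S := by
    simp only [hS, mulVec_sum, mulVec_smul, hPg]
  have hPσ : P * σᵀ = Nᵀ + outer S n := by
    rw [hσ, transpose_add, Matrix.mul_add, hPN, outer, transpose_vecMulVec, mul_vecMulVec, hPS]
    rfl
  rw [scalarCross_eq_vecInv_mul, hPσ, vecInv_add, vecInv_outer]
end
end
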